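/- arXiv:2010.12425 — 4 statements merged into one kernel-verified Lean document; each statement's English description precedes it below -/
import Mathlib

section
/- Let C be a (strict) finite tensor category and A, B algebras in C. Then there are natural isomorphisms (i) Hom_B(M ⊗_A V, U) ≅ Hom_{(A,B)}(V, *M ⊗ U), (ii) Hom_A(M, X ⊗ N) ≅ Hom_C(M ⊗_A *N, X), and (iii) Hom_A(M, X ⊗ N) ≅ Hom_A(X* ⊗ M, N), for all X ∈ C, M, N ∈ C_A, V ∈ _AC_B, U ∈ C_B. -/
/-!
Common framework: left/right module categories over a tensor category,
module functors, module natural transformations, pre-balancings and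
module (co)ends, internal Homs, following Bortolussi–Mombelli,
"(co)ends for representations of tensor categories".

Throughout, a *finite tensor category* is modelled as an abelian,
`k`-linear, monoidally preadditive/linear rigid monoidal category with
simple unit object (finiteness of the underlying abelian category is not
used in the statements below and is omitted).
-/

open CategoryTheory Category MonoidalCategory Opposite

universe w w₁ w₂ v u v₁ u₁ v₂ u₂ v₃ u₃ v₄ u₄

namespace TensorModuleEnd

variable (C : Type u) [Category.{v} C] [MonoidalCategory C]

/-- A left module category structure of a monoidal category `C` on a category `M`.
The action bifunctor is encoded as a functor `act : C ⥤ M ⥤ M`, with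
`X ▷ m = (act.obj X).obj m`, together with coherent associativity and
unit isomorphisms (equations (1), (2) of the paper). -/
structure LeftModuleStr (M : Type u₁) [Category.{v₁} M] where
  act : C ⥤ M ⥤ M
  assoc : ∀ (X Y : C) (m : M),
    (act.obj (X ⊗ Y)).obj m ≅ (act.obj X).obj ((act.obj Y).obj m)
  unitIso : ∀ (m : M), (act.obj (𝟙_ C)).obj m ≅ m
  assoc_natural_left : ∀ {X X' : C} (f : X ⟶ X') (Y : C) (m : M),
    (act.map (f ▷ Y)).app m ≫ (assoc X' Y m).hom =
      (assoc X Y m).hom ≫ (act.map f).app ((act.obj Y).obj m)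
  assoc_natural_mid : ∀ (X : C) {Y Y' : C} (g : Y ⟶ Y') (m : M),
    (act.map (X ◁ g)).app m ≫ (assoc X Y' m).hom =
      (assoc X Y m).hom ≫ (act.obj X).map ((act.map g).app m)
  assoc_natural_obj : ∀ (X Y : C) {m m' : M} (h : m ⟶ m'),
    (act.obj (X ⊗ Y)).map h ≫ (assoc X Y m').hom =
      (assoc X Y m).hom ≫ (act.obj X).map ((act.obj Y).map h)
  unit_natural : ∀ {m m' : M} (h : m ⟶ m'),
    (act.obj (𝟙_ C)).map h ≫ (unitIso m').hom = (unitIso m).hom ≫ h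
  pentagon : ∀ (X Y Z : C) (m : M),
    (assoc (X ⊗ Y) Z m).hom ≫ (assoc X Y ((act.obj Z).obj m)).hom =
      (act.map (α_ X Y Z).hom).app m ≫ (assoc X (Y ⊗ Z) m).hom ≫
        (act.obj X).map ((assoc Y Z m).hom)
  triangle : ∀ (X : C) (m : M),
    (assoc X (𝟙_ C) m).hom ≫ (act.obj X).map ((unitIso m).hom) =
      (act.map (ρ_ X).hom).app m

/-- A right module category structure of `C` on `M`; here `(act.obj X).obj m`
plays the role of `m ◁ X` (equations (11), (12) of the paper). -/
structure RightModuleStr (M : Type u₁) [Category.{v₁} M] where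
  act : C ⥤ M ⥤ M
  assoc : ∀ (X Y : C) (m : M),
    (act.obj (X ⊗ Y)).obj m ≅ (act.obj Y).obj ((act.obj X).obj m)
  unitIso : ∀ (m : M), (act.obj (𝟙_ C)).obj m ≅ m
  assoc_natural_left : ∀ {X X' : C} (f : X ⟶ X') (Y : C) (m : M),
    (act.map (f ▷ Y)).app m ≫ (assoc X' Y m).hom =
      (assoc X Y m).hom ≫ (act.obj Y).map ((act.map f).app m)
  assoc_natural_mid : ∀ (X : C) {Y Y' : C} (g : Y ⟶ Y') (m : M),
    (act.map (X ◁ g)).app m ≫ (assoc X Y' m).hom =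
      (assoc X Y m).hom ≫ (act.map g).app ((act.obj X).obj m)
  assoc_natural_obj : ∀ (X Y : C) {m m' : M} (h : m ⟶ m'),
    (act.obj (X ⊗ Y)).map h ≫ (assoc X Y m').hom =
      (assoc X Y m).hom ≫ (act.obj Y).map ((act.obj X).map h)
  unit_natural : ∀ {m m' : M} (h : m ⟶ m'),
    (act.obj (𝟙_ C)).map h ≫ (unitIso m').hom = (unitIso m).hom ≫ h
  pentagon : ∀ (X Y Z : C) (m : M),
    (act.map (α_ X Y Z).hom).app m ≫ (assoc X (Y ⊗ Z) m).hom ≫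
        (assoc Y Z ((act.obj X).obj m)).hom =
      (assoc (X ⊗ Y) Z m).hom ≫ (act.obj Z).map ((assoc X Y m).hom)
  triangle : ∀ (X : C) (m : M),
    (assoc (𝟙_ C) X m).hom ≫ (act.obj X).map ((unitIso m).hom) =
      (act.map (λ_ X).hom).app m

variable {C}

/-- A left module category `M` over `C` is *exact* if `P ▷ m` is projective in `M`
for every projective `P : C` and every `m : M`. -/
def LeftModuleStr.IsExact {M : Type u₁} [Category.{v₁} M] (ρ : LeftModuleStr C M) : Prop :=
  ∀ (P : C), Projective P → ∀ m : M, Projective ((ρ.act.obj P).obj m)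

/-- A `C`-module functor `(F, c)` between left `C`-module categories
(equations (3), (4) of the paper). -/
structure ModuleFunctor {M : Type u₁} [Category.{v₁} M] {N : Type u₂} [Category.{v₂} N]
    (ρ : LeftModuleStr C M) (σ : LeftModuleStr C N) where
  F : M ⥤ N
  str : ∀ (X : C) (m : M), F.obj ((ρ.act.obj X).obj m) ≅ (σ.act.obj X).obj (F.obj m)
  str_natural_obj : ∀ (X : C) {m m' : M} (h : m ⟶ m'),
    F.map ((ρ.act.obj X).map h) ≫ (str X m').hom =
      (str X m).hom ≫ (σ.act.obj X).map (F.map h)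
  str_natural_tensor : ∀ {X X' : C} (f : X ⟶ X') (m : M),
    F.map ((ρ.act.map f).app m) ≫ (str X' m).hom =
      (str X m).hom ≫ (σ.act.map f).app (F.obj m)
  pentagon : ∀ (X Y : C) (m : M),
    F.map ((ρ.assoc X Y m).hom) ≫ (str X ((ρ.act.obj Y).obj m)).hom ≫
        (σ.act.obj X).map ((str Y m).hom) =
      (str (X ⊗ Y) m).hom ≫ (σ.assoc X Y (F.obj m)).hom
  unit : ∀ (m : M),
    (str (𝟙_ C) m).hom ≫ (σ.unitIso (F.obj m)).hom = F.map ((ρ.unitIso m).hom)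

/-- A module natural transformation between module functors (equation (5)). -/
def IsModuleNatTrans {M : Type u₁} [Category.{v₁} M] {N : Type u₂} [Category.{v₂} N]
    {ρ : LeftModuleStr C M} {σ : LeftModuleStr C N}
    (F G : ModuleFunctor ρ σ) (θ : F.F ⟶ G.F) : Prop :=
  ∀ (X : C) (m : M),
    θ.app ((ρ.act.obj X).obj m) ≫ (G.str X m).hom =
      (F.str X m).hom ≫ (σ.act.obj X).map (θ.app m)

/-- The category `Fun_C(M, N)` of `C`-module functors and module natural
transformations. -/
instance moduleFunctorCategory {M : Type u₁} [Category.{v₁} M] {N : Type u₂} [Category.{v₂} N]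
    (ρ : LeftModuleStr C M) (σ : LeftModuleStr C N) :
    Category (ModuleFunctor ρ σ) where
  Hom F G := { θ : F.F ⟶ G.F // IsModuleNatTrans F G θ }
  id F := ⟨𝟙 F.F, by intro X m; simp⟩
  comp {F G H} θ θ' := ⟨θ.1 ≫ θ'.1, by
    intro X m
    have h1 := θ.2 X m
    have h2 := θ'.2 X m
    simp only [NatTrans.comp_app, Category.assoc, Functor.map_comp]
    rw [h2, reassoc_of% h1]⟩
  id_comp f := by apply Subtype.ext; simp
  comp_id f := by apply Subtype.ext; simp
  assoc f g h := by apply Subtype.ext; simp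

section ModuleEnds

variable {M : Type u₁} [Category.{v₁} M] {A : Type u₂} [Category.{v₂} A]

/-- `S(f, g)` for a functor `S : Mᵒᵖ × M ⥤ A`, contravariant in the first
variable: here `f : m' ⟶ m` and `g : n ⟶ n'`. -/
abbrev smap (S : Mᵒᵖ × M ⥤ A) {m m' n n' : M} (f : m' ⟶ m) (g : n ⟶ n') :
    S.obj (op m, n) ⟶ S.obj (op m', n') :=
  S.map ((f.op, g) : ((op m, n) : Mᵒᵖ × M) ⟶ (op m', n'))

variable [RightRigidCategory C]

/-- A *pre-balancing* for a functor `S : Mᵒᵖ × M ⥤ A`, where `M` is a left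
`C`-module category: a family of natural isomorphisms
`β^X_{m,n} : S(m, X ▷ n) ≅ S(Xᘁ ▷ m, n)`. -/
structure PreBalancing (ρ : LeftModuleStr C M) (S : Mᵒᵖ × M ⥤ A) where
  iso : ∀ (X : C) (m n : M),
    S.obj (op m, (ρ.act.obj X).obj n) ≅ S.obj (op ((ρ.act.obj Xᘁ).obj m), n)
  natural : ∀ (X : C) {m m' n n' : M} (f : m' ⟶ m) (g : n ⟶ n'),
    smap S f ((ρ.act.obj X).map g) ≫ (iso X m' n').hom =
      (iso X m n).hom ≫ smap S ((ρ.act.obj Xᘁ).map f) g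
  natural_tensor : ∀ {X X' : C} (f : X ⟶ X') (m n : M),
    smap S (𝟙 m) ((ρ.act.map f).app n) ≫ (iso X' m n).hom =
      (iso X m n).hom ≫ smap S ((ρ.act.map (fᘁ)).app m) (𝟙 n)

variable (ρ : LeftModuleStr C M) (S : Mᵒᵖ × M ⥤ A)

/-- The canonical morphism `(Xᘁ ⊗ X) ▷ m ⟶ m` induced by the evaluation
(and the unit isomorphism). -/
def evActHom (X : C) (m : M) : (ρ.act.obj (Xᘁ ⊗ X)).obj m ⟶ m :=
  (ρ.act.map (ε_ X Xᘁ)).app m ≫ (ρ.unitIso m).hom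

/-- The canonical morphism `m ⟶ (X ⊗ Xᘁ) ▷ m` induced by the coevaluation. -/
def coevActHom (X : C) (m : M) : m ⟶ (ρ.act.obj (X ⊗ Xᘁ)).obj m :=
  (ρ.unitIso m).inv ≫ (ρ.act.map (η_ X Xᘁ)).app m

variable {ρ S}

/-- A *wedge* for `(S, β)` relative to a class `P` of objects of `C`:
a dinatural family `π` satisfying the module-end compatibility (equation (5)
of Section 3 of the paper) for every `X` in `P`.  Taking `P = fun _ => True`
gives module-end wedges; taking `P = fun _ => False` gives ordinary wedges
(for the ordinary end); an intermediate `P` corresponds to restricting the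
module structure to a tensor subcategory. -/
structure ModuleEndCone (β : PreBalancing ρ S) (P : C → Prop) where
  pt : A
  π : ∀ m : M, pt ⟶ S.obj (op m, m)
  dinatural : ∀ {m n : M} (f : m ⟶ n),
    π m ≫ smap S (𝟙 m) f = π n ≫ smap S f (𝟙 n)
  compat : ∀ (X : C), P X → ∀ (m : M),
    π m ≫ smap S (evActHom ρ X m) (𝟙 m) =
      π ((ρ.act.obj X).obj m) ≫ (β.iso X ((ρ.act.obj X).obj m) m).hom ≫
        smap S ((ρ.assoc Xᘁ X m).hom) (𝟙 m)

/-- Universality: `E` is a *module end* of `(S, β)` (relative to `P`). -/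
def IsModuleEnd {β : PreBalancing ρ S} {P : C → Prop} (E : ModuleEndCone β P) : Prop :=
  ∀ (E' : ModuleEndCone β P), ∃! h : E'.pt ⟶ E.pt, ∀ m : M, h ≫ E.π m = E'.π m

/-- A *cowedge* for `(S, β)` relative to `P` (for module coends,
equation (6) of the paper). -/
structure ModuleCoendCocone (β : PreBalancing ρ S) (P : C → Prop) where
  pt : A
  ι : ∀ m : M, S.obj (op m, m) ⟶ pt
  dinatural : ∀ {m n : M} (f : m ⟶ n),
    smap S f (𝟙 m) ≫ ι m = smap S (𝟙 n) f ≫ ι n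
  compat : ∀ (X : C), P X → ∀ (m : M),
    ι m = smap S (𝟙 m) (coevActHom ρ X m ≫ (ρ.assoc X Xᘁ m).hom) ≫
        (β.iso X m ((ρ.act.obj Xᘁ).obj m)).hom ≫ ι ((ρ.act.obj Xᘁ).obj m)

/-- Universality: `E` is a *module coend* of `(S, β)` (relative to `P`). -/
def IsModuleCoend {β : PreBalancing ρ S} {P : C → Prop} (E : ModuleCoendCocone β P) : Prop :=
  ∀ (E' : ModuleCoendCocone β P), ∃! h : E.pt ⟶ E'.pt, ∀ m : M, E.ι m ≫ h = E'.ι m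

end ModuleEnds

section InternalHom

variable {M : Type u₁} [Category.{v₁} M]

/-- Internal Hom data for a left `C`-module category: a bifunctor
`H : Mᵒᵖ × M ⥤ C` together with bijections
`(X ⟶ uhom(m,n)) ≃ (X ▷ m ⟶ n)` natural in all three variables. -/
structure InternalHom (ρ : LeftModuleStr C M) where
  H : Mᵒᵖ × M ⥤ C
  repr : ∀ (X : C) (m n : M), (X ⟶ H.obj (op m, n)) ≃ ((ρ.act.obj X).obj m ⟶ n)
  repr_natural : ∀ {X X' : C} (f : X ⟶ X') (m n : M) (u : X' ⟶ H.obj (op m, n)),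
    repr X m n (f ≫ u) = (ρ.act.map f).app m ≫ repr X' m n u
  repr_natural_m : ∀ (X : C) {m m' : M} (f : m' ⟶ m) (n : M)
      (u : X ⟶ H.obj (op m, n)),
    repr X m' n (u ≫ smap H f (𝟙 n)) = (ρ.act.obj X).map f ≫ repr X m n u
  repr_natural_n : ∀ (X : C) (m : M) {n n' : M} (g : n ⟶ n')
      (u : X ⟶ H.obj (op m, n)),
    repr X m n' (u ≫ smap H (𝟙 m) g) = repr X m n u ≫ g

variable [RightRigidCategory C]

/-- Internal Hom data for the right `C`-module category `Mᵒᵖ` opposite to a left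
`C`-module category `M` (with action `m̄ ◁ X = (Xᘁ ▷ m)‾`): a bifunctor
`H' : M × Mᵒᵖ ⥤ C` (with `H'.obj (m, op n) = uhom_{Mᵒᵖ}(m̄, n̄)`) together with
bijections `(X ⟶ uhom_{Mᵒᵖ}(m̄, n̄)) ≃ (m̄ ◁ X ⟶ n̄) = (n ⟶ Xᘁ ▷ m)`
natural in all three variables. -/
structure OpInternalHom (ρ : LeftModuleStr C M) where
  H : M × Mᵒᵖ ⥤ C
  repr : ∀ (X : C) (m n : M), (X ⟶ H.obj (m, op n)) ≃ (n ⟶ (ρ.act.obj Xᘁ).obj m)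
  repr_natural : ∀ {X X' : C} (f : X ⟶ X') (m n : M) (u : X' ⟶ H.obj (m, op n)),
    repr X m n (f ≫ u) = repr X' m n u ≫ (ρ.act.map (fᘁ)).app m
  repr_natural_m : ∀ (X : C) {m m' : M} (f : m ⟶ m') (n : M)
      (u : X ⟶ H.obj (m, op n)),
    repr X m' n (u ≫ H.map ((f, 𝟙 (op n)) : ((m, op n) : M × Mᵒᵖ) ⟶ (m', op n))) =
      repr X m n u ≫ (ρ.act.obj Xᘁ).map f
  repr_natural_n : ∀ (X : C) (m : M) {n n' : M} (g : n' ⟶ n)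
      (u : X ⟶ H.obj (m, op n)),
    repr X m n' (u ≫ H.map ((𝟙 m, g.op) : ((m, op n) : M × Mᵒᵖ) ⟶ (m, op n'))) =
      g ≫ repr X m n u

end InternalHom


/-! ### Algebras and modules internal to `C` -/

section Algebra

variable {C : Type u} [Category.{v} C] [MonoidalCategory C]

/-- A right module in `C` over an algebra `A` in `C`. -/
structure MRightMod (A : Mon C) where
  X : C
  act : X ⊗ A.X ⟶ X
  act_one : (X ◁ (MonObj.one (X := A.X))) ≫ act = (ρ_ X).hom
  act_mul : (α_ X A.X A.X).hom ≫ (X ◁ (MonObj.mul (X := A.X))) ≫ act = (act ▷ A.X) ≫ act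

variable [LeftRigidCategory C]

/-- The canonical left `A`-action `λ_{ᘁM} : A ⊗ ᘁM ⟶ ᘁM` on the left dual of a
right `A`-module `M` (equation (14) of the paper). -/
def dualAct (A : Mon C) (M : MRightMod A) : A.X ⊗ (ᘁ(M.X)) ⟶ (ᘁ(M.X)) :=
  (λ_ (A.X ⊗ (ᘁ(M.X)))).inv ≫
    ((η_ (ᘁ(M.X)) M.X) ▷ (A.X ⊗ (ᘁ(M.X)))) ≫
      (α_ (ᘁ(M.X)) M.X (A.X ⊗ (ᘁ(M.X)))).hom ≫
        ((ᘁ(M.X)) ◁ ((α_ M.X A.X (ᘁ(M.X))).inv ≫ (M.act ▷ (ᘁ(M.X))) ≫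
          (ε_ (ᘁ(M.X)) M.X))) ≫
          (ρ_ (ᘁ(M.X))).hom

/-- Morphisms of right `A`-modules. -/
def IsRightModHom {A : Mon C} (M N : MRightMod A) (f : M.X ⟶ N.X) : Prop :=
  M.act ≫ f = (f ▷ A.X) ≫ N.act

/-- The category of right `A`-modules in `C`. -/
instance mRightModCategory (A : Mon C) : Category (MRightMod A) where
  Hom M N := { f : M.X ⟶ N.X // IsRightModHom M N f }
  id M := ⟨𝟙 M.X, by simp [IsRightModHom]⟩
  comp {M N O} f g := ⟨f.1 ≫ g.1, by
    have hf := f.2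
    have hg := g.2
    simp only [IsRightModHom] at *
    rw [← Category.assoc, hf, Category.assoc, hg, ← comp_whiskerRight_assoc]⟩
  id_comp f := by apply Subtype.ext; simp
  comp_id f := by apply Subtype.ext; simp
  assoc f g h := by apply Subtype.ext; simp

end Algebra

/-- A bimodule in `C` over algebras `A`, `B` in `C`. -/
structure MBimod {C : Type u} [Category.{v} C] [MonoidalCategory C] (A B : Mon C) where
  X : C
  actL : A.X ⊗ X ⟶ X
  actR : X ⊗ B.X ⟶ X
  actL_one : ((MonObj.one (X := A.X)) ▷ X) ≫ actL = (λ_ X).hom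
  actL_mul : (α_ A.X A.X X).hom ≫ (A.X ◁ actL) ≫ actL = ((MonObj.mul (X := A.X)) ▷ X) ≫ actL
  actR_one : (X ◁ (MonObj.one (X := B.X))) ≫ actR = (ρ_ X).hom
  actR_mul : (α_ X B.X B.X).hom ≫ (X ◁ (MonObj.mul (X := B.X))) ≫ actR = (actR ▷ B.X) ≫ actR
  middle : (actL ▷ B.X) ≫ actR = (α_ A.X X B.X).hom ≫ (A.X ◁ actR) ≫ actL

/-!
All three bijections are restrictions of the rigidity adjunctions
`(Y' ⊗ X ⟶ Z) ≃ (X ⟶ Y ⊗ Z)` and `(X ⊗ ᘁN ⟶ Z) ≃ (X ⟶ Z ⊗ N)`. The dual action on `ᘁM` is by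
construction the mate of the action of `M`, so these adjunctions
match `A`-balanced maps with `A`-linear ones, and they match `B`-linear maps with `B`-linear ones.
The coequalizer property of `M ⊗_A V` identifies `A`-balanced maps out of `M ⊗ V` with maps out of
`M ⊗_A V`; `B`-linearity transfers along it because `π ▷ B` is again epi, `- ▷ B` being a left
adjoint.
-/

open Limits

section Mates

variable {D : Type u₃} [Category.{v₃} D] [MonoidalCategory D]

lemma epi_whiskerRight_of_hasRightDual {W T : D} (p : W ⟶ T) [Epi p] (B : D) [HasRightDual B] :
    Epi (p ▷ B) :=
  have := Functor.preservesEpimorphisms_of_adjunction (tensorRightAdjunction B Bᘁ)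
  (tensorRight B).map_epi p

lemma tensorLeftHomEquiv_whiskerRight_comp {X B Y Y' Z Z' : D} [ExactPairing Y Y']
    (k : Y' ⊗ X ⟶ Z) (u : Z ⊗ B ⟶ Z') :
    tensorLeftHomEquiv (X ⊗ B) Y Y' Z' ((α_ Y' X B).inv ≫ (k ▷ B) ≫ u) =
      (tensorLeftHomEquiv X Y Y' Z k ▷ B) ≫ (α_ Y Z B).hom ≫ (Y ◁ u) := by
  simp [tensorLeftHomEquiv]

lemma rightLinear_tensorLeftHomEquiv_iff {X B Y Y' Z : D} [ExactPairing Y Y']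
    (w : X ⊗ B ⟶ X) (u : Z ⊗ B ⟶ Z) (k : Y' ⊗ X ⟶ Z) :
    w ≫ tensorLeftHomEquiv X Y Y' Z k =
        (tensorLeftHomEquiv X Y Y' Z k ▷ B) ≫ (α_ Y Z B).hom ≫ (Y ◁ u) ↔
      (α_ Y' X B).hom ≫ (Y' ◁ w) ≫ k = (k ▷ B) ≫ u := by
  rw [← Equiv.apply_eq_iff_eq (tensorLeftHomEquiv (X ⊗ B) Y Y' Z).symm,
    tensorLeftHomEquiv_symm_naturality, Equiv.symm_apply_apply,
    ← tensorLeftHomEquiv_whiskerRight_comp, Equiv.symm_apply_apply, Iso.eq_inv_comp]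

lemma rightLinear_iff_of_epi {W T U B : D} [HasRightDual B] (p : W ⟶ T) [Epi p]
    {ρW : W ⊗ B ⟶ W} {ρT : T ⊗ B ⟶ T} (hρ : (p ▷ B) ≫ ρT = ρW ≫ p) (uact : U ⊗ B ⟶ U)
    (f : T ⟶ U) :
    ρT ≫ f = (f ▷ B) ≫ uact ↔ ρW ≫ p ≫ f = ((p ≫ f) ▷ B) ≫ uact := by
  have := epi_whiskerRight_of_hasRightDual p B
  rw [← cancel_epi (p ▷ B), reassoc_of% hρ, comp_whiskerRight, assoc]

noncomputable def homTensorEquivDualTensorHom {A : Mon D} (M N : MRightMod A) (X : D)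
    [HasRightDual X] :
    { h : M.X ⟶ X ⊗ N.X // M.act ≫ h = (h ▷ A.X) ≫ (α_ X N.X A.X).hom ≫ (X ◁ N.act) } ≃
      { u : (Xᘁ) ⊗ M.X ⟶ N.X //
        (α_ (Xᘁ) M.X A.X).hom ≫ ((Xᘁ) ◁ M.act) ≫ u = (u ▷ A.X) ≫ N.act } :=
  ((tensorLeftHomEquiv M.X X (Xᘁ) N.X).subtypeEquiv fun u =>
    (rightLinear_tensorLeftHomEquiv_iff M.act N.act u).symm).symm

variable [LeftRigidCategory D]

lemma whiskerLeft_dualAct_comp_ev (A : Mon D) (M : MRightMod A) :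
    (M.X ◁ dualAct A M) ≫ ε_ (ᘁ(M.X)) M.X =
      (α_ M.X A.X (ᘁ(M.X))).inv ≫ (M.act ▷ (ᘁ(M.X))) ≫ ε_ (ᘁ(M.X)) M.X := by
  set φ := (α_ M.X A.X (ᘁ(M.X))).inv ≫ (M.act ▷ (ᘁ(M.X))) ≫ ε_ (ᘁ(M.X)) M.X
  calc _ = 𝟙 _ ⊗≫ M.X ◁ η_ (ᘁ(M.X)) M.X ▷ (A.X ⊗ (ᘁ(M.X))) ⊗≫
          ((M.X ⊗ (ᘁ(M.X))) ◁ φ ≫ ε_ (ᘁ(M.X)) M.X ▷ 𝟙_ D) ⊗≫ 𝟙 _ := by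
        dsimp only [dualAct, φ]; monoidal
    _ = 𝟙 _ ⊗≫ (M.X ◁ η_ (ᘁ(M.X) : D) M.X ⊗≫ ε_ (ᘁ(M.X) : D) M.X ▷ M.X) ▷ (A.X ⊗ (ᘁ(M.X))) ⊗≫
          φ := by
        rw [whisker_exchange]; monoidal
    _ = φ := by rw [ExactPairing.coevaluation_evaluation'']; monoidal

lemma tensorLeftHomEquiv_symm_whiskerLeft_comp_dualAct (A : Mon D) (M : MRightMod A) {V U : D}
    (g : V ⟶ (ᘁ(M.X)) ⊗ U) :
    (tensorLeftHomEquiv (A.X ⊗ V) (ᘁ(M.X)) M.X U).symm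
        ((A.X ◁ g) ≫ (α_ A.X (ᘁ(M.X)) U).inv ≫ (dualAct A M ▷ U)) =
      (α_ M.X A.X V).inv ≫ (M.act ▷ V) ≫ (tensorLeftHomEquiv V (ᘁ(M.X)) M.X U).symm g := by
  calc _ = 𝟙 _ ⊗≫ M.X ◁ A.X ◁ g ⊗≫
          (M.X ◁ dualAct A M ≫ ε_ (ᘁ(M.X) : D) M.X) ▷ U ⊗≫ 𝟙 _ := by
        dsimp only [tensorLeftHomEquiv, Equiv.coe_fn_symm_mk]; monoidal
    _ = 𝟙 _ ⊗≫ ((M.X ⊗ A.X) ◁ g ≫ M.act ▷ ((ᘁ(M.X) : D) ⊗ U)) ⊗≫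
          ε_ (ᘁ(M.X) : D) M.X ▷ U ⊗≫ 𝟙 _ := by
        rw [whiskerLeft_dualAct_comp_ev]; monoidal
    _ = _ := by
        rw [whisker_exchange]; dsimp only [tensorLeftHomEquiv, Equiv.coe_fn_symm_mk]; monoidal

lemma balanced_iff_leftLinear_tensorLeftHomEquiv (A : Mon D) (M : MRightMod A) {V U : D}
    (actL : A.X ⊗ V ⟶ V) (k : M.X ⊗ V ⟶ U) :
    ((α_ M.X A.X V).inv ≫ (M.act ▷ V)) ≫ k = (M.X ◁ actL) ≫ k ↔
      actL ≫ tensorLeftHomEquiv V (ᘁ(M.X)) M.X U k =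
        (A.X ◁ tensorLeftHomEquiv V (ᘁ(M.X)) M.X U k) ≫ (α_ A.X (ᘁ(M.X)) U).inv ≫
          (dualAct A M ▷ U) := by
  rw [← Equiv.apply_eq_iff_eq (tensorLeftHomEquiv (A.X ⊗ V) (ᘁ(M.X)) M.X U).symm,
    tensorLeftHomEquiv_symm_naturality, tensorLeftHomEquiv_symm_whiskerLeft_comp_dualAct,
    Equiv.symm_apply_apply, assoc, eq_comm]

lemma tensorRightHomEquiv_symm_whiskerRight_comp_act (A : Mon D) (N : MRightMod A) {W X : D}
    (h : W ⟶ X ⊗ N.X) :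
    (tensorRightHomEquiv (W ⊗ A.X) (ᘁ(N.X)) N.X X).symm
        ((h ▷ A.X) ≫ (α_ X N.X A.X).hom ≫ (X ◁ N.act)) =
      (α_ W A.X (ᘁ(N.X))).hom ≫ (W ◁ dualAct A N) ≫
        (tensorRightHomEquiv W (ᘁ(N.X)) N.X X).symm h := by
  calc _ = 𝟙 _ ⊗≫ h ▷ (A.X ⊗ (ᘁ(N.X) : D)) ⊗≫
          X ◁ ((α_ N.X A.X (ᘁ(N.X))).inv ≫ N.act ▷ (ᘁ(N.X) : D) ≫ ε_ (ᘁ(N.X) : D) N.X) ⊗≫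
          𝟙 _ := by
        dsimp only [tensorRightHomEquiv, Equiv.coe_fn_symm_mk]; monoidal
    _ = 𝟙 _ ⊗≫ (h ▷ (A.X ⊗ (ᘁ(N.X) : D)) ≫ (X ⊗ N.X) ◁ dualAct A N) ⊗≫
          X ◁ ε_ (ᘁ(N.X) : D) N.X ⊗≫ 𝟙 _ := by
        rw [← whiskerLeft_dualAct_comp_ev]; monoidal
    _ = _ := by
        rw [← whisker_exchange]; dsimp only [tensorRightHomEquiv, Equiv.coe_fn_symm_mk]; monoidal

lemma balanced_iff_leftLinear_tensorRightHomEquiv (A : Mon D) (N : MRightMod A) {W X : D}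
    (act : W ⊗ A.X ⟶ W) (k : W ⊗ (ᘁ(N.X)) ⟶ X) :
    ((α_ W A.X (ᘁ(N.X))).inv ≫ (act ▷ (ᘁ(N.X)))) ≫ k = (W ◁ dualAct A N) ≫ k ↔
      act ≫ tensorRightHomEquiv W (ᘁ(N.X)) N.X X k =
        (tensorRightHomEquiv W (ᘁ(N.X)) N.X X k ▷ A.X) ≫ (α_ X N.X A.X).hom ≫ (X ◁ N.act) := by
  rw [← Equiv.apply_eq_iff_eq (tensorRightHomEquiv (W ⊗ A.X) (ᘁ(N.X)) N.X X).symm,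
    tensorRightHomEquiv_symm_naturality, tensorRightHomEquiv_symm_whiskerRight_comp_act,
    Equiv.symm_apply_apply, assoc, Iso.inv_comp_eq]

noncomputable def relTensorHomEquiv {A B : Mon D} (M : MRightMod A) (V : MBimod A B)
    (U : MRightMod B) [HasRightDual B.X] {T : D} {π : M.X ⊗ V.X ⟶ T}
    {w : ((α_ M.X A.X V.X).inv ≫ (M.act ▷ V.X)) ≫ π = (M.X ◁ V.actL) ≫ π}
    (hT : IsColimit (Cofork.ofπ π w)) {ρT : T ⊗ B.X ⟶ T}
    (hρT : (π ▷ B.X) ≫ ρT = (α_ M.X V.X B.X).hom ≫ (M.X ◁ V.actR) ≫ π) :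
    { f : T ⟶ U.X // ρT ≫ f = (f ▷ B.X) ≫ U.act } ≃
      { g : V.X ⟶ (ᘁ(M.X)) ⊗ U.X //
        V.actL ≫ g = (A.X ◁ g) ≫ (α_ A.X (ᘁ(M.X)) U.X).inv ≫ (dualAct A M ▷ U.X) ∧
        V.actR ≫ g = (g ▷ B.X) ≫ (α_ (ᘁ(M.X)) U.X B.X).hom ≫ ((ᘁ(M.X)) ◁ U.act) } := by
  have : Epi π := epi_of_isColimit_cofork hT
  refine (Equiv.subtypeEquiv ((Cofork.IsColimit.homIso hT U.X).trans
    ((tensorLeftHomEquiv V.X (ᘁ(M.X)) M.X U.X).subtypeEquiv fun k =>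
      balanced_iff_leftLinear_tensorLeftHomEquiv A M V.actL k)) fun f => ?_).trans
    (Equiv.subtypeSubtypeEquivSubtypeInter _ _)
  rw [rightLinear_iff_of_epi π (hρT.trans (assoc _ _ _).symm) U.act f, assoc]
  exact (rightLinear_tensorLeftHomEquiv_iff V.actR U.act (π ≫ f)).symm

noncomputable def homTensorEquivRelTensorHom {A : Mon D} (M N : MRightMod A) {T : D}
    {π : M.X ⊗ (ᘁ(N.X)) ⟶ T}
    {w : ((α_ M.X A.X (ᘁ(N.X))).inv ≫ (M.act ▷ (ᘁ(N.X)))) ≫ π = (M.X ◁ dualAct A N) ≫ π}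
    (hT : IsColimit (Cofork.ofπ π w)) (X : D) :
    { h : M.X ⟶ X ⊗ N.X // M.act ≫ h = (h ▷ A.X) ≫ (α_ X N.X A.X).hom ≫ (X ◁ N.act) } ≃
      (T ⟶ X) :=
  ((Cofork.IsColimit.homIso hT X).trans
    ((tensorRightHomEquiv M.X (ᘁ(N.X)) N.X X).subtypeEquiv fun k =>
      balanced_iff_leftLinear_tensorRightHomEquiv A N M.act k)).symm

end Mates

variable {k : Type w} [Field k]

theorem statement0_general
    {C : Type u} [Category.{v} C] [MonoidalCategory C] [RigidCategory C]
    (A B : Mon C) (M N : MRightMod A) (V : MBimod A B) (U : MRightMod B)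
    -- the relative tensor product `T = M ⊗_A V`, with its right `B`-action:
    (T : C) (piT : M.X ⊗ V.X ⟶ T)
    (hcoeq : (α_ M.X A.X V.X).inv ≫ (M.act ▷ V.X) ≫ piT = (M.X ◁ V.actL) ≫ piT)
    (huniv : ∀ {Z : C} (h : M.X ⊗ V.X ⟶ Z),
      ((α_ M.X A.X V.X).inv ≫ (M.act ▷ V.X) ≫ h = (M.X ◁ V.actL) ≫ h) →
        ∃! g : T ⟶ Z, piT ≫ g = h)
    (ρT : T ⊗ B.X ⟶ T)
    (hρT : (piT ▷ B.X) ≫ ρT = (α_ M.X V.X B.X).hom ≫ (M.X ◁ V.actR) ≫ piT)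
    -- the relative tensor product `T₂ = M ⊗_A ᘁN`:
    (T₂ : C) (piT₂ : M.X ⊗ (ᘁ(N.X)) ⟶ T₂)
    (hcoeq₂ : (α_ M.X A.X (ᘁ(N.X))).inv ≫ (M.act ▷ (ᘁ(N.X))) ≫ piT₂ =
      (M.X ◁ dualAct A N) ≫ piT₂)
    (huniv₂ : ∀ {Z : C} (h : M.X ⊗ (ᘁ(N.X)) ⟶ Z),
      ((α_ M.X A.X (ᘁ(N.X))).inv ≫ (M.act ▷ (ᘁ(N.X))) ≫ h =
        (M.X ◁ dualAct A N) ≫ h) → ∃! g : T₂ ⟶ Z, piT₂ ≫ g = h) :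
    -- (i) `Hom_B(M ⊗_A V, U) ≅ Hom_{(A,B)}(V, ᘁM ⊗ U)`, via
    -- `Φ(f) = (id_{ᘁM} ⊗ (f ∘ π)) ∘ (coev_M ⊗ id_V)`:
    (∃ e : { f : T ⟶ U.X // ρT ≫ f = (f ▷ B.X) ≫ U.act } ≃
        { g : V.X ⟶ (ᘁ(M.X)) ⊗ U.X //
          V.actL ≫ g =
            (A.X ◁ g) ≫ (α_ A.X (ᘁ(M.X)) U.X).inv ≫ (dualAct A M ▷ U.X) ∧
          V.actR ≫ g =
            (g ▷ B.X) ≫ (α_ (ᘁ(M.X)) U.X B.X).hom ≫ ((ᘁ(M.X)) ◁ U.act) },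
      ∀ f, (e f).1 =
        (λ_ V.X).inv ≫ ((η_ (ᘁ(M.X)) M.X) ▷ V.X) ≫
          (α_ (ᘁ(M.X)) M.X V.X).hom ≫ ((ᘁ(M.X)) ◁ (piT ≫ f.1))) ∧
    -- (ii) `Hom_A(M, X ⊗ N) ≅ Hom_C(M ⊗_A ᘁN, X)`, naturally in `X`, with
    -- inverse `Ψ(α) = ((α ∘ π) ⊗ id_N) ∘ (id_M ⊗ coev_N)`:
    (∃ e₂ : ∀ X : C,
        { h : M.X ⟶ X ⊗ N.X //
          M.act ≫ h = (h ▷ A.X) ≫ (α_ X N.X A.X).hom ≫ (X ◁ N.act) } ≃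
          (T₂ ⟶ X),
      ∀ (X : C) (α : T₂ ⟶ X),
        ((e₂ X).symm α).1 =
          (ρ_ M.X).inv ≫ (M.X ◁ (η_ (ᘁ(N.X)) N.X)) ≫
            (α_ M.X (ᘁ(N.X)) N.X).inv ≫ ((piT₂ ≫ α) ▷ N.X)) ∧
    -- (iii) `Hom_A(M, X ⊗ N) ≅ Hom_A(Xᘁ ⊗ M, N)`, naturally in `X`, via the
    -- rigidity adjunction:
    (∃ e₃ : ∀ X : C,
        { h : M.X ⟶ X ⊗ N.X //
          M.act ≫ h = (h ▷ A.X) ≫ (α_ X N.X A.X).hom ≫ (X ◁ N.act) } ≃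
          { u : (Xᘁ) ⊗ M.X ⟶ N.X //
            (α_ (Xᘁ) M.X A.X).hom ≫ ((Xᘁ) ◁ M.act) ≫ u = (u ▷ A.X) ≫ N.act },
      ∀ (X : C) (h : { h : M.X ⟶ X ⊗ N.X //
          M.act ≫ h = (h ▷ A.X) ≫ (α_ X N.X A.X).hom ≫ (X ◁ N.act) }),
        ((e₃ X) h).1 =
          ((Xᘁ) ◁ h.1) ≫ (α_ (Xᘁ) X N.X).inv ≫
            ((ε_ X (Xᘁ)) ▷ N.X) ≫ (λ_ N.X).hom) := by
  have hT : IsColimit (Cofork.ofπ (f := (α_ M.X A.X V.X).inv ≫ (M.act ▷ V.X)) piT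
      ((assoc _ _ _).trans hcoeq)) :=
    Cofork.IsColimit.ofExistsUnique fun s => huniv s.π ((assoc _ _ _).symm.trans s.condition)
  have hT₂ : IsColimit (Cofork.ofπ (f := (α_ M.X A.X (ᘁ(N.X))).inv ≫ (M.act ▷ (ᘁ(N.X)))) piT₂
      ((assoc _ _ _).trans hcoeq₂)) :=
    Cofork.IsColimit.ofExistsUnique fun s => huniv₂ s.π ((assoc _ _ _).symm.trans s.condition)
  exact ⟨⟨relTensorHomEquiv M V U hT hρT, fun _ => rfl⟩,
    ⟨homTensorEquivRelTensorHom M N hT₂, fun _ _ => rfl⟩,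
    ⟨fun X => homTensorEquivDualTensorHom M N X, fun _ _ => rfl⟩⟩

theorem statement0
    {C : Type u} [Category.{v} C] [Abelian C] [CategoryTheory.Linear k C]
    [MonoidalCategory C] [MonoidalPreadditive C] [MonoidalLinear k C]
    [RigidCategory C] [Simple (𝟙_ C)]
    (A B : Mon C) (M N : MRightMod A) (V : MBimod A B) (U : MRightMod B)
    -- the relative tensor product `T = M ⊗_A V`, with its right `B`-action:
    (T : C) (piT : M.X ⊗ V.X ⟶ T)
    (hcoeq : (α_ M.X A.X V.X).inv ≫ (M.act ▷ V.X) ≫ piT = (M.X ◁ V.actL) ≫ piT)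
    (huniv : ∀ {Z : C} (h : M.X ⊗ V.X ⟶ Z),
      ((α_ M.X A.X V.X).inv ≫ (M.act ▷ V.X) ≫ h = (M.X ◁ V.actL) ≫ h) →
        ∃! g : T ⟶ Z, piT ≫ g = h)
    (ρT : T ⊗ B.X ⟶ T)
    (hρT : (piT ▷ B.X) ≫ ρT = (α_ M.X V.X B.X).hom ≫ (M.X ◁ V.actR) ≫ piT)
    -- the relative tensor product `T₂ = M ⊗_A ᘁN`:
    (T₂ : C) (piT₂ : M.X ⊗ (ᘁ(N.X)) ⟶ T₂)
    (hcoeq₂ : (α_ M.X A.X (ᘁ(N.X))).inv ≫ (M.act ▷ (ᘁ(N.X))) ≫ piT₂ =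
      (M.X ◁ dualAct A N) ≫ piT₂)
    (huniv₂ : ∀ {Z : C} (h : M.X ⊗ (ᘁ(N.X)) ⟶ Z),
      ((α_ M.X A.X (ᘁ(N.X))).inv ≫ (M.act ▷ (ᘁ(N.X))) ≫ h =
        (M.X ◁ dualAct A N) ≫ h) → ∃! g : T₂ ⟶ Z, piT₂ ≫ g = h) :
    -- (i) `Hom_B(M ⊗_A V, U) ≅ Hom_{(A,B)}(V, ᘁM ⊗ U)`, via
    -- `Φ(f) = (id_{ᘁM} ⊗ (f ∘ π)) ∘ (coev_M ⊗ id_V)`: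
    (∃ e : { f : T ⟶ U.X // ρT ≫ f = (f ▷ B.X) ≫ U.act } ≃
        { g : V.X ⟶ (ᘁ(M.X)) ⊗ U.X //
          V.actL ≫ g =
            (A.X ◁ g) ≫ (α_ A.X (ᘁ(M.X)) U.X).inv ≫ (dualAct A M ▷ U.X) ∧
          V.actR ≫ g =
            (g ▷ B.X) ≫ (α_ (ᘁ(M.X)) U.X B.X).hom ≫ ((ᘁ(M.X)) ◁ U.act) },
      ∀ f, (e f).1 =
        (λ_ V.X).inv ≫ ((η_ (ᘁ(M.X)) M.X) ▷ V.X) ≫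
          (α_ (ᘁ(M.X)) M.X V.X).hom ≫ ((ᘁ(M.X)) ◁ (piT ≫ f.1))) ∧
    -- (ii) `Hom_A(M, X ⊗ N) ≅ Hom_C(M ⊗_A ᘁN, X)`, naturally in `X`, with
    -- inverse `Ψ(α) = ((α ∘ π) ⊗ id_N) ∘ (id_M ⊗ coev_N)`:
    (∃ e₂ : ∀ X : C,
        { h : M.X ⟶ X ⊗ N.X //
          M.act ≫ h = (h ▷ A.X) ≫ (α_ X N.X A.X).hom ≫ (X ◁ N.act) } ≃
          (T₂ ⟶ X),
      ∀ (X : C) (α : T₂ ⟶ X),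
        ((e₂ X).symm α).1 =
          (ρ_ M.X).inv ≫ (M.X ◁ (η_ (ᘁ(N.X)) N.X)) ≫
            (α_ M.X (ᘁ(N.X)) N.X).inv ≫ ((piT₂ ≫ α) ▷ N.X)) ∧
    -- (iii) `Hom_A(M, X ⊗ N) ≅ Hom_A(Xᘁ ⊗ M, N)`, naturally in `X`, via the
    -- rigidity adjunction:
    (∃ e₃ : ∀ X : C,
        { h : M.X ⟶ X ⊗ N.X //
          M.act ≫ h = (h ▷ A.X) ≫ (α_ X N.X A.X).hom ≫ (X ◁ N.act) } ≃
          { u : (Xᘁ) ⊗ M.X ⟶ N.X //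
            (α_ (Xᘁ) M.X A.X).hom ≫ ((Xᘁ) ◁ M.act) ≫ u = (u ▷ A.X) ≫ N.act },
      ∀ (X : C) (h : { h : M.X ⟶ X ⊗ N.X //
          M.act ≫ h = (h ▷ A.X) ≫ (α_ X N.X A.X).hom ≫ (X ◁ N.act) }),
        ((e₃ X) h).1 =
          ((Xᘁ) ◁ h.1) ≫ (α_ (Xᘁ) X N.X).inv ≫
            ((ε_ X (Xᘁ)) ▷ N.X) ≫ (λ_ N.X).hom) :=
  statement0_general A B M N V U T piT hcoeq huniv ρT hρT T₂ piT₂ hcoeq₂ huniv₂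

end TensorModuleEnd
end

section
/- (Parameter theorem for module ends) Let C be a finite tensor category, M a left C-module category, A, B categories, and S : M^op × M → Fun(A, B) a functor equipped with a pre-balancing β. For each A ∈ A let S_A : M^op × M → B be the evaluation S_A(M,N) = S(M,N)(A) with the induced pre-balancing β^A. If all module ends ∮_{M∈M}(S_A, β^A) exist, then the assignment A ↦ ∮_{M∈M}(S_A, β^A) extends to a functor 𝔖 : A → B which is a module end of S in Fun(A,B), i.e. 𝔖 ≅ (∮_{M∈M}(S,β))(−). -/
/-!
Common framework: left/right module categories over a tensor category,
module functors, module natural transformations, pre-balancings and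
module (co)ends, internal Homs, following Bortolussi–Mombelli,
"(co)ends for representations of tensor categories".

Throughout, a *finite tensor category* is modelled as an abelian,
`k`-linear, monoidally preadditive/linear rigid monoidal category with
simple unit object (finiteness of the underlying abelian category is not
used in the statements below and is omitted).
-/

open CategoryTheory Category MonoidalCategory Opposite

universe w w₁ w₂ v u v₁ u₁ v₂ u₂ v₃ u₃ v₄ u₄

namespace TensorModuleEnd

variable (C : Type u) [Category.{v} C] [MonoidalCategory C]

variable {C}

section Whisker

variable {M : Type u₁} [Category.{v₁} M] {A : Type u₂} [Category.{v₂} A]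
  {B : Type u₃} [Category.{v₃} B]
  {C : Type u} [Category.{v} C] [MonoidalCategory C] [RightRigidCategory C]
  {ρ : LeftModuleStr C M} {S : Mᵒᵖ × M ⥤ A}

/-- A pre-balancing transported along a functor. -/
def PreBalancing.whisker (β : PreBalancing ρ S) (F : A ⥤ B) :
    PreBalancing ρ (S ⋙ F) where
  iso X m n := F.mapIso (β.iso X m n)
  natural := by
    intro X m m' n n' f g
    have h := β.natural X f g
    dsimp only [smap, Functor.comp_map, Functor.mapIso_hom]
    rw [← F.map_comp, ← F.map_comp, h]
  natural_tensor := by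
    intro X X' f m n
    have h := β.natural_tensor f m n
    dsimp only [smap, Functor.comp_map, Functor.mapIso_hom]
    rw [← F.map_comp, ← F.map_comp, h]

/-- A wedge transported along a functor. -/
def ModuleEndCone.whisker {β : PreBalancing ρ S} {P : C → Prop}
    (E : ModuleEndCone β P) (F : A ⥤ B) :
    ModuleEndCone (β.whisker F) P where
  pt := F.obj E.pt
  π m := F.map (E.π m)
  dinatural := by
    intro m n f
    have h := E.dinatural f
    dsimp only [smap, Functor.comp_map]
    rw [← F.map_comp, ← F.map_comp, h]
  compat := by
    intro X hX m
    have h := E.compat X hX m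
    dsimp only [smap, Functor.comp_map, PreBalancing.whisker, Functor.mapIso_hom]
    simp only [← F.map_comp]
    rw [h]

end Whisker

/-!
The value of the assembled functor on `f : a ⟶ a'` is the unique factorization, through the end
at `a'`, of the wedge at `a` followed by `S(m, m)(f)`. Both functoriality and the universal
property in `A ⥤ B` then reduce to the pointwise universal properties, because morphisms of
functors are compared componentwise.
-/

section UniversalProperty

variable {M : Type u₁} [Category.{v₁} M] {A : Type u₂} [Category.{v₂} A]
  {C : Type u} [Category.{v} C] [MonoidalCategory C] [RightRigidCategory C]
  {ρ : LeftModuleStr C M} {S : Mᵒᵖ × M ⥤ A} {β : PreBalancing ρ S} {P : C → Prop}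

def ModuleEndCone.precomp (E : ModuleEndCone β P) {X : A} (f : X ⟶ E.pt) :
    ModuleEndCone β P where
  pt := X
  π m := f ≫ E.π m
  dinatural g := by rw [assoc, assoc, E.dinatural g]
  compat Y hY m := by rw [assoc, assoc, E.compat Y hY m]

namespace IsModuleEnd

variable {E : ModuleEndCone β P}

noncomputable def lift (hE : IsModuleEnd E) (E' : ModuleEndCone β P) : E'.pt ⟶ E.pt :=
  (hE E').choose

lemma fac (hE : IsModuleEnd E) (E' : ModuleEndCone β P) (m : M) :
    hE.lift E' ≫ E.π m = E'.π m :=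
  (hE E').choose_spec.1 m

lemma hom_ext (hE : IsModuleEnd E) {X : A} {f g : X ⟶ E.pt}
    (h : ∀ m, f ≫ E.π m = g ≫ E.π m) : f = g :=
  (hE (E.precomp g)).unique h fun _ => rfl

end IsModuleEnd

end UniversalProperty

section Parameter

variable {M : Type u₁} [Category.{v₁} M] {A : Type u₂} [Category.{v₂} A]
  {B : Type u₃} [Category.{v₃} B]
  {C : Type u} [Category.{v} C] [MonoidalCategory C] [RightRigidCategory C]
  {ρ : LeftModuleStr C M} {P : C → Prop}

def ModuleEndCone.postcompose {S : Mᵒᵖ × M ⥤ A} {β : PreBalancing ρ S} {F G : A ⥤ B}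
    (E : ModuleEndCone (β.whisker F) P) (τ : F ⟶ G) : ModuleEndCone (β.whisker G) P where
  pt := E.pt
  π m := E.π m ≫ τ.app _
  dinatural g := by
    have h := E.dinatural g
    dsimp only [smap, Functor.comp_map] at h ⊢
    rw [assoc, assoc, ← τ.naturality, reassoc_of% h, τ.naturality]
  compat X hX m := by
    have h := E.compat X hX m
    simp only [smap, Functor.comp_map, PreBalancing.whisker, Functor.mapIso_hom] at h ⊢
    simp only [assoc, ← τ.naturality, ← τ.naturality_assoc, reassoc_of% h]

variable {S : Mᵒᵖ × M ⥤ (A ⥤ B)} {β : PreBalancing ρ S}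
  (c : ∀ a : A, ModuleEndCone (β.whisker ((evaluation A B).obj a)) P)
  (hc : ∀ a : A, IsModuleEnd (c a))

noncomputable def pointwiseEndMap {a a' : A} (f : a ⟶ a') : (c a).pt ⟶ (c a').pt :=
  (hc a').lift ((c a).postcompose ((evaluation A B).map f))

lemma pointwiseEndMap_π {a a' : A} (f : a ⟶ a') (m : M) :
    pointwiseEndMap c hc f ≫ (c a').π m = (c a).π m ≫ (S.obj (op m, m)).map f :=
  (hc a').fac _ m

noncomputable def pointwiseEndFunctor : A ⥤ B where
  obj a := (c a).pt
  map f := pointwiseEndMap c hc f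
  map_id a := (hc a).hom_ext fun m => by simp [pointwiseEndMap_π]
  map_comp f g := (hc _).hom_ext fun m => by
    simp [pointwiseEndMap_π, reassoc_of% pointwiseEndMap_π]

noncomputable def pointwiseEndCone : ModuleEndCone β P where
  pt := pointwiseEndFunctor c hc
  π m :=
    { app a := (c a).π m
      naturality _ _ f := pointwiseEndMap_π c hc f m }
  dinatural f := by ext a; exact (c a).dinatural f
  compat X hX m := by ext a; exact (c a).compat X hX m

noncomputable def pointwiseEndLift (E : ModuleEndCone β P) :
    E.pt ⟶ pointwiseEndFunctor c hc where
  app a := (hc a).lift (E.whisker ((evaluation A B).obj a))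
  naturality a a' f := (hc a').hom_ext fun m => by
    dsimp only [pointwiseEndFunctor, ModuleEndCone.whisker, evaluation_obj_obj]
    rw [assoc, assoc, (hc a').fac, pointwiseEndMap_π, reassoc_of% (hc a).fac]
    exact (E.π m).naturality f

lemma pointwiseEndLift_app_π (E : ModuleEndCone β P) (a : A) (m : M) :
    (pointwiseEndLift c hc E).app a ≫ (c a).π m = (E.π m).app a :=
  (hc a).fac _ m

lemma isModuleEnd_pointwiseEndCone : IsModuleEnd (pointwiseEndCone c hc) := by
  intro E
  refine ⟨pointwiseEndLift c hc E, fun m => ?_, fun g hg => ?_⟩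
  · ext a
    exact pointwiseEndLift_app_π c hc E a m
  · ext a
    exact (hc a).hom_ext fun m =>
      (congr_app (hg m) a).trans (pointwiseEndLift_app_π c hc E a m).symm

lemma pointwiseEndCone_whisker (a : A) :
    (pointwiseEndCone c hc).whisker ((evaluation A B).obj a) = c a :=
  rfl

end Parameter

variable {k : Type w} [Field k]

theorem statement7_general
    {C : Type u} [Category.{v} C]
    [MonoidalCategory C]
    [RigidCategory C]
    {M : Type u₁} [Category.{v₁} M]
    {A : Type u₂} [Category.{v₂} A] {B : Type u₃} [Category.{v₃} B]
    (ρ : LeftModuleStr C M)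
    (S : Mᵒᵖ × M ⥤ (A ⥤ B))
    (β : PreBalancing ρ S)
    -- given, for every `a : A`, a module end of the evaluated functor
    -- `S_a = S(-,-)(a)` with its induced pre-balancing:
    (c : ∀ a : A,
      ModuleEndCone (β.whisker ((evaluation A B).obj a)) (fun _ => True))
    (hc : ∀ a : A, IsModuleEnd (c a)) :
    -- the module end of `S` exists in the functor category `Fun(A, B)`, its
    -- evaluation at every `a : A` is a module end of `S_a`, and in particular
    -- it agrees with the given pointwise module ends:
    ∃ E : ModuleEndCone β (fun _ => True), IsModuleEnd E ∧
      ∀ a : A, IsModuleEnd (E.whisker ((evaluation A B).obj a)) ∧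
        Nonempty ((E.whisker ((evaluation A B).obj a)).pt ≅ (c a).pt) := by
  refine ⟨pointwiseEndCone c hc, isModuleEnd_pointwiseEndCone c hc, fun a => ?_⟩
  rw [pointwiseEndCone_whisker]
  exact ⟨hc a, ⟨Iso.refl _⟩⟩

theorem statement7
    {C : Type u} [Category.{v} C] [Abelian C] [CategoryTheory.Linear k C]
    [MonoidalCategory C] [MonoidalPreadditive C] [MonoidalLinear k C]
    [RigidCategory C] [Simple (𝟙_ C)]
    {M : Type u₁} [Category.{v₁} M] [Abelian M] [CategoryTheory.Linear k M]
    {A : Type u₂} [Category.{v₂} A] {B : Type u₃} [Category.{v₃} B]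
    (ρ : LeftModuleStr C M)
    (S : Mᵒᵖ × M ⥤ (A ⥤ B))
    (β : PreBalancing ρ S)
    -- given, for every `a : A`, a module end of the evaluated functor
    -- `S_a = S(-,-)(a)` with its induced pre-balancing:
    (c : ∀ a : A,
      ModuleEndCone (β.whisker ((evaluation A B).obj a)) (fun _ => True))
    (hc : ∀ a : A, IsModuleEnd (c a)) :
    -- the module end of `S` exists in the functor category `Fun(A, B)`, its
    -- evaluation at every `a : A` is a module end of `S_a`, and in particular
    -- it agrees with the given pointwise module ends:
    ∃ E : ModuleEndCone β (fun _ => True), IsModuleEnd E ∧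
      ∀ a : A, IsModuleEnd (E.whisker ((evaluation A B).obj a)) ∧
        Nonempty ((E.whisker ((evaluation A B).obj a)).pt ≅ (c a).pt) :=
  statement7_general ρ S β c hc

end TensorModuleEnd
end

section
/- Let C be a finite tensor category, D ⊆ C a tensor subcategory, M a left C-module category, and S : M^op × M → A a functor with pre-balancing β. Then (i) there is a monomorphism in A from the module end over C to the module end over the restricted D-module category: ∮_{M∈M}(S,β) ↪ ∮_{M∈Res^D_C M}(S,β); and (ii) there is an epimorphism of module coends ∮^{M∈Res^D_C M}(S,β) ↠ ∮^{M∈M}(S,β). -/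
/-!
Common framework: left/right module categories over a tensor category,
module functors, module natural transformations, pre-balancings and
module (co)ends, internal Homs, following Bortolussi–Mombelli,
"(co)ends for representations of tensor categories".

Throughout, a *finite tensor category* is modelled as an abelian,
`k`-linear, monoidally preadditive/linear rigid monoidal category with
simple unit object (finiteness of the underlying abelian category is not
used in the statements below and is omitted).
-/

open CategoryTheory Category MonoidalCategory Opposite

universe w w₁ w₂ v u v₁ u₁ v₂ u₂ v₃ u₃ v₄ u₄

namespace TensorModuleEnd

variable (C : Type u) [Category.{v} C] [MonoidalCategory C]

variable {C}

/-!
## STATEMENT 8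

Restriction of module (co)ends to a tensor subcategory.  A tensor subcategory
of `C` is modelled by a class `P` of objects of `C` containing the unit and
closed under tensor products and duals; the module (co)end over the restricted
`D`-module category is then the (co)end relative to the class `P`, while the
module (co)end over `C` is the (co)end relative to the class of all objects.
(Proposition 3.9 of the paper.)
-/

variable {k : Type w} [Field k]

theorem statement8
    {C : Type u} [Category.{v} C] [Abelian C] [CategoryTheory.Linear k C]
    [MonoidalCategory C] [MonoidalPreadditive C] [MonoidalLinear k C]
    [RigidCategory C] [Simple (𝟙_ C)]
    {M : Type u₁} [Category.{v₁} M] [Abelian M] [CategoryTheory.Linear k M]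
    {A : Type u₂} [Category.{v₂} A] [Abelian A] [CategoryTheory.Linear k A]
    (ρ : LeftModuleStr C M)
    (S : Mᵒᵖ × M ⥤ A)
    (β : PreBalancing ρ S)
    -- `P` cuts out a tensor subcategory `D ⊆ C`:
    (P : C → Prop)
    (hP_unit : P (𝟙_ C))
    (hP_tensor : ∀ X Y : C, P X → P Y → P (X ⊗ Y))
    (hP_rightDual : ∀ X : C, P X → P (Xᘁ))
    (hP_leftDual : ∀ X : C, P X → P (ᘁX)) :
    -- (i) the module end over `C` embeds into the module end over the
    -- restriction `Res^D_C M`: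
    (∀ (E : ModuleEndCone β (fun _ => True)) (E' : ModuleEndCone β P),
      IsModuleEnd E → IsModuleEnd E' →
        ∃ h : E.pt ⟶ E'.pt, (∀ m : M, h ≫ E'.π m = E.π m) ∧ Mono h) ∧
    -- (ii) the module coend over the restriction surjects onto the module
    -- coend over `C`:
    (∀ (Ec : ModuleCoendCocone β P) (Ec' : ModuleCoendCocone β (fun _ => True)),
      IsModuleCoend Ec → IsModuleCoend Ec' →
        ∃ g : Ec.pt ⟶ Ec'.pt, (∀ m : M, Ec.ι m ≫ g = Ec'.ι m) ∧ Epi g) := by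
  constructor
  · intro E E' hE hE'
    -- restrict E to a P-cone
    let Eres : ModuleEndCone β P :=
      { pt := E.pt
        π := E.π
        dinatural := E.dinatural
        compat := fun X _ m => E.compat X trivial m }
    obtain ⟨h, hh, -⟩ := hE' Eres
    refine ⟨h, hh, ?_⟩
    constructor
    intro T a b hab
    -- build the cone induced by a
    let Ea : ModuleEndCone β (fun _ => True) :=
      { pt := T
        π := fun m => a ≫ E.π m
        dinatural := fun {m n} f => by
          simp only [Category.assoc, E.dinatural f]
        compat := fun X _ m => by
          simp only [Category.assoc, E.compat X trivial m] }
    obtain ⟨h₀, -, huniq⟩ := hE Ea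
    have ha : ∀ m : M, a ≫ E.π m = Ea.π m := fun m => rfl
    have hb : ∀ m : M, b ≫ E.π m = Ea.π m := by
      intro m
      calc b ≫ E.π m = b ≫ h ≫ E'.π m := by rw [hh]
        _ = a ≫ h ≫ E'.π m := by rw [← Category.assoc, ← hab, Category.assoc]
        _ = a ≫ E.π m := by rw [hh]
    rw [huniq a ha, huniq b hb]
  · intro Ec Ec' hEc hEc'
    -- restrict Ec' to a P-cocone
    let Eres : ModuleCoendCocone β P :=
      { pt := Ec'.pt
        ι := Ec'.ι
        dinatural := Ec'.dinatural
        compat := fun X _ m => Ec'.compat X trivial m }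
    obtain ⟨g, hg, -⟩ := hEc Eres
    refine ⟨g, hg, ?_⟩
    constructor
    intro T a b hab
    let Ea : ModuleCoendCocone β (fun _ => True) :=
      { pt := T
        ι := fun m => Ec'.ι m ≫ a
        dinatural := fun {m n} f => by
          rw [← Category.assoc, Ec'.dinatural f, Category.assoc]
        compat := fun X _ m => by
          show Ec'.ι m ≫ a = _
          rw [Ec'.compat X trivial m]; simp only [Category.assoc] }
    obtain ⟨h₀, -, huniq⟩ := hEc' Ea
    have ha : ∀ m : M, Ec'.ι m ≫ a = Ea.ι m := fun m => rfl
    have hb : ∀ m : M, Ec'.ι m ≫ b = Ea.ι m := by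
      intro m
      calc Ec'.ι m ≫ b = (Ec.ι m ≫ g) ≫ b := by rw [hg]
        _ = (Ec.ι m ≫ g) ≫ a := by rw [Category.assoc, ← hab, ← Category.assoc]
        _ = Ec'.ι m ≫ a := by rw [hg]
    rw [huniq a ha, huniq b hb]
end TensorModuleEnd
end

section
/- Let C be a finite tensor category, M and N left C-module categories, and (F,c), (G,d) : M → N C-module functors. Then the functor Hom_N(F(−), G(−)) : M^op × M → vect_k admits the pre-balancing β^X_{M,N}(α) = (ev_X ▷ id_{G(N)}) ∘ m^{-1}_{X*,X,G(N)} ∘ (id_{X*} ▷ (d_{X,N} ∘ α)) ∘ c_{X*,M}, and there is an isomorphism Nat_m(F,G) ≅ ∮_{M∈M}(Hom_N(F(−), G(−)), β). -/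
/-!
Common framework: left/right module categories over a tensor category,
module functors, module natural transformations, pre-balancings and
module (co)ends, internal Homs, following Bortolussi–Mombelli,
"(co)ends for representations of tensor categories".

Throughout, a *finite tensor category* is modelled as an abelian,
`k`-linear, monoidally preadditive/linear rigid monoidal category with
simple unit object (finiteness of the underlying abelian category is not
used in the statements below and is omitted).
-/

open CategoryTheory Category MonoidalCategory Opposite

universe w w₁ w₂ v u v₁ u₁ v₂ u₂ v₃ u₃ v₄ u₄

namespace TensorModuleEnd

variable (C : Type u) [Category.{v} C] [MonoidalCategory C]

variable {C}

/-!
The pre-balancing is the composite of three bijections: postcomposition with `d_{X,n}`, the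
duality adjunction `(a ⟶ X ▷ b) ≃ (Xᘁ ▷ a ⟶ b)` of the action (built from evaluation and
coevaluation, whose zigzag identities follow from those of `C` and the coherence of the action),
and precomposition with `c_{Xᘁ,m}`. A wedge of `Hom_N(F -, G -)` is a natural transformation
`θ : F ⟶ G`, and transporting the module-end condition at `(X, m)` through the adjunction turns
it into the module-naturality square of `θ` at `(X, m)`. So wedges are exactly module natural
transformations, and `Nat_m(F, G)` with the evaluations is the universal wedge.
-/

namespace LeftModuleStr

variable {N : Type u₂} [Category.{v₂} N] (σ : LeftModuleStr C N)

lemma act_unit_map_injective {a b : N} {f g : a ⟶ b}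
    (h : (σ.act.obj (𝟙_ C)).map f = (σ.act.obj (𝟙_ C)).map g) : f = g := by
  rw [← cancel_epi (σ.unitIso a).hom, ← σ.unit_natural, h, σ.unit_natural]

lemma assoc_inv_naturality_obj (X Y : C) {b b' : N} (g : b ⟶ b') :
    (σ.act.obj X).map ((σ.act.obj Y).map g) ≫ (σ.assoc X Y b').inv =
      (σ.assoc X Y b).inv ≫ (σ.act.obj (X ⊗ Y)).map g := by
  rw [Iso.comp_inv_eq, Category.assoc, σ.assoc_natural_obj, Iso.inv_hom_id_assoc]

/-- The module-category analogue of Kelly's `leftUnitor_tensor`. -/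
lemma assoc_hom_unitIso_hom (X : C) (b : N) :
    (σ.assoc (𝟙_ C) X b).hom ≫ (σ.unitIso ((σ.act.obj X).obj b)).hom =
      (σ.act.map (λ_ X).hom).app b := by
  apply σ.act_unit_map_injective
  rw [← cancel_epi ((σ.assoc (𝟙_ C) ((𝟙_ C) ⊗ X) b).hom),
    ← cancel_epi ((σ.act.map (α_ (𝟙_ C) (𝟙_ C) X).hom).app b), ← σ.assoc_natural_mid]
  calc (σ.act.map (α_ (𝟙_ C) (𝟙_ C) X).hom).app b ≫ (σ.assoc (𝟙_ C) ((𝟙_ C) ⊗ X) b).hom ≫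
        (σ.act.obj (𝟙_ C)).map ((σ.assoc (𝟙_ C) X b).hom ≫ (σ.unitIso _).hom)
      = ((σ.assoc ((𝟙_ C) ⊗ (𝟙_ C)) X b).hom ≫
          (σ.assoc (𝟙_ C) (𝟙_ C) ((σ.act.obj X).obj b)).hom) ≫
          (σ.act.obj (𝟙_ C)).map (σ.unitIso ((σ.act.obj X).obj b)).hom := by
        rw [σ.pentagon]; simp only [Functor.map_comp, Category.assoc]
    _ = (σ.act.map ((ρ_ (𝟙_ C)).hom ▷ X)).app b ≫ (σ.assoc (𝟙_ C) X b).hom := by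
        rw [Category.assoc, σ.triangle, σ.assoc_natural_left]
    _ = (σ.act.map (α_ (𝟙_ C) (𝟙_ C) X).hom).app b ≫
          (σ.act.map ((𝟙_ C) ◁ (λ_ X).hom)).app b ≫ (σ.assoc (𝟙_ C) X b).hom := by
        rw [← MonoidalCategory.triangle, Functor.map_comp, NatTrans.comp_app, Category.assoc]

variable [RightRigidCategory C]

lemma evActHom_naturality (X : C) {a b : N} (f : a ⟶ b) :
    (σ.act.obj (Xᘁ ⊗ X)).map f ≫ evActHom σ X b = evActHom σ X a ≫ f := by
  simp only [evActHom]
  rw [← Category.assoc, (σ.act.map (ε_ X Xᘁ)).naturality f, Category.assoc, σ.unit_natural f,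
    Category.assoc]

lemma coevActHom_naturality (X : C) {a b : N} (f : a ⟶ b) :
    f ≫ coevActHom σ X b = coevActHom σ X a ≫ (σ.act.obj (X ⊗ Xᘁ)).map f := by
  have hunit : f ≫ (σ.unitIso b).inv = (σ.unitIso a).inv ≫ (σ.act.obj (𝟙_ C)).map f := by
    rw [Iso.comp_inv_eq, Category.assoc, σ.unit_natural f, Iso.inv_hom_id_assoc]
  simp only [coevActHom]
  rw [reassoc_of% hunit, (σ.act.map (η_ X Xᘁ)).naturality f, Category.assoc]

lemma evaluation_coevaluation (X : C) (b : N) :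
    coevActHom σ X ((σ.act.obj X).obj b) ≫ (σ.assoc X Xᘁ ((σ.act.obj X).obj b)).hom ≫
      (σ.act.obj X).map ((σ.assoc Xᘁ X b).inv ≫ evActHom σ X b) = 𝟙 _ := by
  have hP : (σ.assoc X Xᘁ ((σ.act.obj X).obj b)).hom ≫
        (σ.act.obj X).map (σ.assoc Xᘁ X b).inv =
      (σ.assoc (X ⊗ Xᘁ) X b).inv ≫ (σ.act.map (α_ X Xᘁ X).hom).app b ≫
        (σ.assoc X (Xᘁ ⊗ X) b).hom := by
    rw [← cancel_mono ((σ.act.obj X).map (σ.assoc Xᘁ X b).hom)]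
    simp only [Category.assoc]
    rw [← Functor.map_comp, Iso.inv_hom_id, CategoryTheory.Functor.map_id, comp_id, ← σ.pentagon,
      Iso.inv_hom_id_assoc]
  have hL : (σ.act.map (η_ X Xᘁ)).app ((σ.act.obj X).obj b) ≫ (σ.assoc (X ⊗ Xᘁ) X b).inv =
      (σ.assoc (𝟙_ C) X b).inv ≫ (σ.act.map (η_ X Xᘁ ▷ X)).app b := by
    rw [Iso.eq_inv_comp, ← Category.assoc, ← σ.assoc_natural_left, Category.assoc, Iso.hom_inv_id,
      comp_id]
  have hU : (σ.unitIso ((σ.act.obj X).obj b)).inv ≫ (σ.assoc (𝟙_ C) X b).inv =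
      (σ.act.map (λ_ X).inv).app b := by
    rw [← cancel_epi ((σ.act.map (λ_ X).hom).app b)]
    conv_lhs => rw [← σ.assoc_hom_unitIso_hom]
    simp [← NatTrans.comp_app, ← Functor.map_comp]
  simp only [coevActHom, evActHom, Functor.map_comp]
  slice_lhs 3 4 => rw [hP]
  slice_lhs 5 6 => rw [← σ.assoc_natural_mid]
  slice_lhs 6 7 => rw [σ.triangle]
  slice_lhs 2 3 => rw [hL]
  slice_lhs 1 2 => rw [hU]
  simp only [← NatTrans.comp_app, ← Functor.map_comp, Category.assoc]
  rw [ExactPairing.evaluation_coevaluation_assoc]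
  simp

lemma coevaluation_evaluation (X : C) (a : N) :
    (σ.act.obj Xᘁ).map (coevActHom σ X a ≫ (σ.assoc X Xᘁ a).hom) ≫
      (σ.assoc Xᘁ X ((σ.act.obj Xᘁ).obj a)).inv ≫ evActHom σ X ((σ.act.obj Xᘁ).obj a) =
        𝟙 _ := by
  have hP : (σ.act.obj Xᘁ).map (σ.assoc X Xᘁ a).hom ≫
        (σ.assoc Xᘁ X ((σ.act.obj Xᘁ).obj a)).inv =
      (σ.assoc Xᘁ (X ⊗ Xᘁ) a).inv ≫ (σ.act.map (α_ Xᘁ X Xᘁ).inv).app a ≫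
        (σ.assoc (Xᘁ ⊗ X) Xᘁ a).hom := by
    rw [← cancel_mono ((σ.assoc Xᘁ X ((σ.act.obj Xᘁ).obj a)).hom)]
    simp only [Category.assoc, Iso.inv_hom_id, comp_id]
    rw [σ.pentagon]
    simp [← NatTrans.comp_app_assoc, ← Functor.map_comp]
  have hU : (σ.act.obj Xᘁ).map (σ.unitIso a).inv =
      (σ.act.map (ρ_ Xᘁ).inv).app a ≫ (σ.assoc Xᘁ (𝟙_ C) a).hom := by
    rw [← cancel_mono ((σ.act.obj Xᘁ).map (σ.unitIso a).hom), Category.assoc, σ.triangle]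
    simp [← Functor.map_comp, ← NatTrans.comp_app]
  simp only [coevActHom, evActHom, Functor.map_comp]
  slice_lhs 1 1 => rw [hU]
  slice_lhs 2 3 => rw [← σ.assoc_natural_mid]
  slice_lhs 4 5 => rw [hP]
  slice_lhs 3 4 => rw [Iso.hom_inv_id]
  simp only [Category.id_comp]
  slice_lhs 4 5 => rw [← σ.assoc_natural_left]
  slice_lhs 5 6 => rw [σ.assoc_hom_unitIso_hom]
  simp only [← NatTrans.comp_app, ← Functor.map_comp]
  rw [ExactPairing.coevaluation_evaluation_assoc]
  simp

@[simps]
def homActEquiv (X : C) (a b : N) :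
    (a ⟶ (σ.act.obj X).obj b) ≃ ((σ.act.obj Xᘁ).obj a ⟶ b) where
  toFun f := (σ.act.obj Xᘁ).map f ≫ (σ.assoc Xᘁ X b).inv ≫ evActHom σ X b
  invFun g := coevActHom σ X a ≫ (σ.assoc X Xᘁ a).hom ≫ (σ.act.obj X).map g
  left_inv f := by
    dsimp only
    rw [Functor.map_comp, ← reassoc_of% (σ.assoc_natural_obj X Xᘁ f),
      ← reassoc_of% (σ.coevActHom_naturality X f), evaluation_coevaluation, comp_id]
  right_inv g := by
    have zigzag := σ.coevaluation_evaluation X a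
    simp only [Functor.map_comp, Category.assoc] at zigzag ⊢
    rw [reassoc_of% (σ.assoc_inv_naturality_obj Xᘁ X g), evActHom_naturality,
      reassoc_of% zigzag]

lemma homActEquiv_naturality_left (X : C) {a a' b : N} (f : a' ⟶ a)
    (φ : a ⟶ (σ.act.obj X).obj b) :
    σ.homActEquiv X a' b (f ≫ φ) = (σ.act.obj Xᘁ).map f ≫ σ.homActEquiv X a b φ := by
  simp

lemma homActEquiv_naturality_right (X : C) {a b b' : N} (φ : a ⟶ (σ.act.obj X).obj b)
    (g : b ⟶ b') :
    σ.homActEquiv X a b' (φ ≫ (σ.act.obj X).map g) = σ.homActEquiv X a b φ ≫ g := by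
  simp only [homActEquiv_apply, Functor.map_comp, Category.assoc]
  rw [reassoc_of% σ.assoc_inv_naturality_obj, evActHom_naturality]

lemma homActEquiv_act_map (X : C) {a b : N} (t : a ⟶ b) :
    σ.homActEquiv X ((σ.act.obj X).obj a) b ((σ.act.obj X).map t) =
      (σ.assoc Xᘁ X a).inv ≫ evActHom σ X a ≫ t := by
  simp only [homActEquiv_apply]
  rw [reassoc_of% σ.assoc_inv_naturality_obj, evActHom_naturality]

lemma homActEquiv_comp_act_map {X X' : C} (g : X ⟶ X') (a b : N)
    (φ : a ⟶ (σ.act.obj X).obj b) :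
    σ.homActEquiv X' a b (φ ≫ (σ.act.map g).app b) =
      (σ.act.map (gᘁ)).app a ≫ σ.homActEquiv X a b φ := by
  have hM : (σ.act.obj X'ᘁ).map ((σ.act.map g).app b) ≫ (σ.assoc X'ᘁ X' b).inv =
      (σ.assoc X'ᘁ X b).inv ≫ (σ.act.map (X'ᘁ ◁ g)).app b := by
    rw [Iso.comp_inv_eq, Category.assoc, σ.assoc_natural_mid, Iso.inv_hom_id_assoc]
  have hL : (σ.act.map (gᘁ)).app ((σ.act.obj X).obj b) ≫ (σ.assoc Xᘁ X b).inv =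
      (σ.assoc X'ᘁ X b).inv ≫ (σ.act.map ((gᘁ) ▷ X)).app b := by
    rw [Iso.comp_inv_eq, Category.assoc, σ.assoc_natural_left, Iso.inv_hom_id_assoc]
  simp only [homActEquiv_apply, Functor.map_comp, Category.assoc]
  rw [reassoc_of% hM, ← (σ.act.map (gᘁ)).naturality_assoc, reassoc_of% hL]
  simp only [evActHom, ← NatTrans.comp_app_assoc, ← Functor.map_comp,
    rightAdjointMate_comp_evaluation]

end LeftModuleStr


namespace ModuleFunctor

variable {M : Type u₁} [Category.{v₁} M] {N : Type u₂} [Category.{v₂} N]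
  {ρ : LeftModuleStr C M} {σ : LeftModuleStr C N} (F : ModuleFunctor ρ σ)

lemma map_assoc_hom_str_hom (X Y : C) (m : M) :
    F.F.map (ρ.assoc X Y m).hom ≫ (F.str X ((ρ.act.obj Y).obj m)).hom =
      (F.str (X ⊗ Y) m).hom ≫ (σ.assoc X Y (F.F.obj m)).hom ≫
        (σ.act.obj X).map (F.str Y m).inv := by
  rw [← cancel_mono ((σ.act.obj X).map (F.str Y m).hom)]
  simp only [Category.assoc, ← Functor.map_comp, Iso.inv_hom_id, CategoryTheory.Functor.map_id,
    comp_id]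
  exact F.pentagon X Y m

lemma map_evActHom [RightRigidCategory C] (X : C) (m : M) :
    F.F.map (evActHom ρ X m) = (F.str (Xᘁ ⊗ X) m).hom ≫ evActHom σ X (F.F.obj m) := by
  rw [evActHom, evActHom, Functor.map_comp, ← F.unit m, ← Category.assoc,
    F.str_natural_tensor, Category.assoc]

end ModuleFunctor

section HomFunctor

variable {M : Type u₁} [Category.{v₁} M] {N : Type u₂} [Category.{v₂} N]
  {ρ : LeftModuleStr C M} {σ : LeftModuleStr C N} (F G : ModuleFunctor ρ σ)

abbrev homBifunctor : Mᵒᵖ × M ⥤ Type (max v₂ u₁) :=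
  (F.F.op.prod G.F) ⋙ Functor.hom N ⋙ uliftFunctor.{u₁, v₂}

variable [RightRigidCategory C]

/-- The pre-balancing `β^X_{m,n}` of Proposition 4.1. -/
def balancingEquiv (X : C) (m n : M) :
    (F.F.obj m ⟶ G.F.obj ((ρ.act.obj X).obj n)) ≃
      (F.F.obj ((ρ.act.obj Xᘁ).obj m) ⟶ G.F.obj n) :=
  ((Iso.refl _).homCongr (G.str X n)).trans
    ((σ.homActEquiv X _ _).trans ((F.str Xᘁ m).symm.homCongr (Iso.refl _)))

lemma balancingEquiv_apply (X : C) (m n : M) (α : F.F.obj m ⟶ G.F.obj ((ρ.act.obj X).obj n)) :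
    balancingEquiv F G X m n α =
      (F.str Xᘁ m).hom ≫ σ.homActEquiv X _ _ (α ≫ (G.str X n).hom) := by
  simp [balancingEquiv]

lemma balancingEquiv_naturality (X : C) {m m' n n' : M} (f : m' ⟶ m) (g : n ⟶ n')
    (α : F.F.obj m ⟶ G.F.obj ((ρ.act.obj X).obj n)) :
    balancingEquiv F G X m' n' (F.F.map f ≫ α ≫ G.F.map ((ρ.act.obj X).map g)) =
      F.F.map ((ρ.act.obj Xᘁ).map f) ≫ balancingEquiv F G X m n α ≫ G.F.map g := by
  simp only [balancingEquiv_apply, Category.assoc, G.str_natural_obj]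
  rw [σ.homActEquiv_naturality_left, reassoc_of% (F.str_natural_obj Xᘁ f), ← Category.assoc α,
    σ.homActEquiv_naturality_right]

lemma balancingEquiv_comp_act_map {X X' : C} (g : X ⟶ X') (m n : M)
    (α : F.F.obj m ⟶ G.F.obj ((ρ.act.obj X).obj n)) :
    balancingEquiv F G X' m n (α ≫ G.F.map ((ρ.act.map g).app n)) =
      F.F.map ((ρ.act.map (gᘁ)).app m) ≫ balancingEquiv F G X m n α := by
  simp only [balancingEquiv_apply, Category.assoc, G.str_natural_tensor]
  rw [← Category.assoc α, σ.homActEquiv_comp_act_map, reassoc_of% (F.str_natural_tensor (gᘁ) m)]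

def homPreBalancing : PreBalancing ρ (homBifunctor F G) where
  iso X m n := (Equiv.ulift.trans ((balancingEquiv F G X m n).trans Equiv.ulift.symm)).toIso
  natural X m m' n n' f g := by
    ext ⟨α⟩
    exact ULift.ext _ _ (balancingEquiv_naturality F G X f g α)
  natural_tensor f m n := by
    ext ⟨α⟩
    refine ULift.ext _ _ ?_
    change balancingEquiv F G _ m n (F.F.map (𝟙 m) ≫ α ≫ _) =
      F.F.map _ ≫ balancingEquiv F G _ m n α ≫ G.F.map (𝟙 n)
    simpa using balancingEquiv_comp_act_map F G f m n α

lemma map_evActHom_comp_eq_iff (X : C) (m : M) (t : F.F.obj m ⟶ G.F.obj m)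
    (s : F.F.obj ((ρ.act.obj X).obj m) ⟶ G.F.obj ((ρ.act.obj X).obj m)) :
    F.F.map (evActHom ρ X m) ≫ t =
        F.F.map (ρ.assoc Xᘁ X m).hom ≫ balancingEquiv F G X _ m s ↔
      s ≫ (G.str X m).hom = (F.str X m).hom ≫ (σ.act.obj X).map t := by
  have lhs : F.F.map (evActHom ρ X m) ≫ t = (F.str (Xᘁ ⊗ X) m).hom ≫
      (σ.assoc Xᘁ X _).hom ≫ σ.homActEquiv X _ _ ((σ.act.obj X).map t) := by
    rw [F.map_evActHom, σ.homActEquiv_act_map, Iso.hom_inv_id_assoc, Category.assoc]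
  have rhs : F.F.map (ρ.assoc Xᘁ X m).hom ≫ balancingEquiv F G X _ m s =
      (F.str (Xᘁ ⊗ X) m).hom ≫ (σ.assoc Xᘁ X _).hom ≫
        σ.homActEquiv X _ _ ((F.str X m).inv ≫ s ≫ (G.str X m).hom) := by
    rw [balancingEquiv_apply, reassoc_of% (F.map_assoc_hom_str_hom Xᘁ X m),
      σ.homActEquiv_naturality_left X (F.str X m).inv]
  rw [lhs, rhs, cancel_epi, cancel_epi, Equiv.apply_eq_iff_eq, Iso.eq_inv_comp, eq_comm]

def moduleNatTransCone : ModuleEndCone (homPreBalancing F G) (fun _ => True) where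
  pt := { θ : F.F ⟶ G.F // IsModuleNatTrans F G θ }
  π m := TypeCat.ofHom fun θ => ⟨θ.1.app m⟩
  dinatural {m n} f := by
    ext θ
    refine ULift.ext _ _ ?_
    change F.F.map (𝟙 m) ≫ θ.1.app m ≫ G.F.map f = F.F.map f ≫ θ.1.app n ≫ G.F.map (𝟙 n)
    simp
  compat X _ m := by
    ext θ
    refine ULift.ext _ _ ?_
    change F.F.map (evActHom ρ X m) ≫ θ.1.app m ≫ G.F.map (𝟙 m) =
      F.F.map (ρ.assoc Xᘁ X m).hom ≫ balancingEquiv F G X _ m (θ.1.app _) ≫ G.F.map (𝟙 m)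
    simpa using (map_evActHom_comp_eq_iff F G X m _ _).mpr (θ.2 X m)

section Wedge

variable {F G} {P : C → Prop} (E : ModuleEndCone (homPreBalancing F G) P) (x : E.pt)

lemma ModuleEndCone.down_naturality {m n : M} (f : m ⟶ n) :
    F.F.map f ≫ (E.π n x).down = (E.π m x).down ≫ G.F.map f := by
  have h : F.F.map (𝟙 m) ≫ (E.π m x).down ≫ G.F.map f =
      F.F.map f ≫ (E.π n x).down ≫ G.F.map (𝟙 n) :=
    congrArg ULift.down (types_congr_hom (E.dinatural f) x)
  simp only [CategoryTheory.Functor.map_id, Category.id_comp] at h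
  erw [Category.comp_id] at h
  exact h.symm

lemma ModuleEndCone.down_compat (X : C) (hX : P X) (m : M) :
    F.F.map (evActHom ρ X m) ≫ (E.π m x).down =
      F.F.map (ρ.assoc Xᘁ X m).hom ≫ balancingEquiv F G X _ m (E.π _ x).down := by
  have h : F.F.map (evActHom ρ X m) ≫ (E.π m x).down ≫ G.F.map (𝟙 m) =
      F.F.map (ρ.assoc Xᘁ X m).hom ≫ balancingEquiv F G X _ m (E.π _ x).down ≫
        G.F.map (𝟙 m) :=
    congrArg ULift.down (types_congr_hom (E.compat X hX m) x)
  simp only [CategoryTheory.Functor.map_id] at h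
  erw [Category.comp_id, Category.comp_id] at h
  exact h

def ModuleEndCone.natTrans : F.F ⟶ G.F where
  app m := (E.π m x).down
  naturality _ _ f := E.down_naturality x f

end Wedge

theorem moduleNatTransCone_isModuleEnd : IsModuleEnd (moduleNatTransCone F G) := by
  intro E
  refine ⟨TypeCat.ofHom fun x => ⟨E.natTrans x, fun X m =>
    (map_evActHom_comp_eq_iff F G X m _ _).mp (E.down_compat x X trivial m)⟩, fun m => rfl, ?_⟩
  intro h hh
  ext x
  refine Subtype.ext (NatTrans.ext (funext fun m => ?_))
  exact congrArg ULift.down (types_congr_hom (hh m) x)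

end HomFunctor

variable {k : Type w} [Field k]

theorem statement11_general
    {C : Type u} [Category.{v} C] [MonoidalCategory C] [RigidCategory C]
    {M : Type u₁} [Category.{v₁} M] {N : Type u₂} [Category.{v₂} N]
    (ρ : LeftModuleStr C M) (σ : LeftModuleStr C N)
    (F G : ModuleFunctor ρ σ) :
    -- the Hom-functor `(m, n) ↦ Hom_N(F m, G n)`:
    ∃ β : PreBalancing ρ
        ((F.F.op.prod G.F) ⋙ Functor.hom N ⋙ uliftFunctor.{u₁, v₂}),
      -- `β` is given by the formula of Proposition 4.1:
      (∀ (X : C) (m n : M)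
          (α : ULift.{u₁} (F.F.obj m ⟶ G.F.obj ((ρ.act.obj X).obj n))),
        ((β.iso X m n).hom α).down =
          (F.str (Xᘁ) m).hom ≫
            (σ.act.obj (Xᘁ)).map (α.down ≫ (G.str X n).hom) ≫
              (σ.assoc (Xᘁ) X (G.F.obj n)).inv ≫
                evActHom σ X (G.F.obj n)) ∧
      -- and `Nat_m(F, G)`, with the evaluations `θ ↦ θ_m` as dinatural
      -- transformations, is a module end of the Hom-functor:
      ∃ E : ModuleEndCone β (fun _ => True), IsModuleEnd E ∧
        ∃ eqv : E.pt ≃ { θ : F.F ⟶ G.F // IsModuleNatTrans F G θ },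
          ∀ (x : E.pt) (m : M), (E.π m x).down = ((eqv x).1).app m :=
  ⟨homPreBalancing F G, fun X m n α => balancingEquiv_apply F G X m n α.down,
    moduleNatTransCone F G, moduleNatTransCone_isModuleEnd F G, Equiv.refl _, fun _ _ => rfl⟩

theorem statement11
    {C : Type u} [Category.{v} C] [Abelian C] [CategoryTheory.Linear k C]
    [MonoidalCategory C] [MonoidalPreadditive C] [MonoidalLinear k C]
    [RigidCategory C] [Simple (𝟙_ C)]
    {M : Type u₁} [Category.{v₁} M] [Abelian M] [CategoryTheory.Linear k M]
    {N : Type u₂} [Category.{v₂} N] [Abelian N] [CategoryTheory.Linear k N]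
    (ρ : LeftModuleStr C M) (σ : LeftModuleStr C N)
    (F G : ModuleFunctor ρ σ) :
    -- the Hom-functor `(m, n) ↦ Hom_N(F m, G n)`:
    ∃ β : PreBalancing ρ
        ((F.F.op.prod G.F) ⋙ Functor.hom N ⋙ uliftFunctor.{u₁, v₂}),
      -- `β` is given by the formula of Proposition 4.1:
      (∀ (X : C) (m n : M)
          (α : ULift.{u₁} (F.F.obj m ⟶ G.F.obj ((ρ.act.obj X).obj n))),
        ((β.iso X m n).hom α).down =
          (F.str (Xᘁ) m).hom ≫
            (σ.act.obj (Xᘁ)).map (α.down ≫ (G.str X n).hom) ≫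
              (σ.assoc (Xᘁ) X (G.F.obj n)).inv ≫
                evActHom σ X (G.F.obj n)) ∧
      -- and `Nat_m(F, G)`, with the evaluations `θ ↦ θ_m` as dinatural
      -- transformations, is a module end of the Hom-functor:
      ∃ E : ModuleEndCone β (fun _ => True), IsModuleEnd E ∧
        ∃ eqv : E.pt ≃ { θ : F.F ⟶ G.F // IsModuleNatTrans F G θ },
          ∀ (x : E.pt) (m : M), (E.π m x).down = ((eqv x).1).app m :=
  statement11_general ρ σ F G

end TensorModuleEnd
end
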